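/- Let q₁, q₂ be distributions over [n], let α* ∈ [0,1], let p = (1−α*)q₁ + α*q₂, and let s > 0. On some probability space, let (X_i)_{i∈[n]}, (Y_i)_{i∈[n]}, (Z_i)_{i∈[n]} be mutually independent random variables with X_i ∼ Poisson(s·p(i)), Y_i ∼ Poisson(s·q₁(i)), Z_i ∼ Poisson(s·q₂(i)), and define B := 2 ∑_{i=1}^n (Y_i + X_i Y_i + Y_i Z_i − Y_i² − X_i Z_i). Then E[B] = −2 α* s² ‖q₁ − q₂‖₂², and for any b ≥ max(‖q₁‖₂², ‖q₂‖₂²), Var(B) ≤ 32 s³ ‖q₁ − q₂‖₄² √b + 28 s² b. -/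

import Mathlib

open Finset MeasureTheory ProbabilityTheory

/-- A distribution over `[n]`: nonnegative values summing to 1. -/
def IsDist {n : ℕ} (p : Fin n → ℝ) : Prop :=
  (∀ i, 0 ≤ p i) ∧ ∑ i, p i = 1

/-!
The summand of `B` is `t(x, y, z) = (x - y)(y - z) + y`. For independent Poisson variables of
rates `a, b, c`, the factorial moments `E[X(X-1)⋯(X-k+1)] = aᵏ` turn every moment of `t(X, Y, Z)`
into a polynomial in `a, b, c`: the mean is `(a - b)(b - c)` (the `+ y` cancels the variance of
`Y`) and the variance is an explicit quartic. With `(a, b, c) = s(p, q₁, q₂)` and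
`p - q₁ = α*(q₂ - q₁)` the mean is `-α* s² (q₁ - q₂)²`. The triples `(Xᵢ, Yᵢ, Zᵢ)` are independent
across `i`, so the variances add up. In the total, the `s²`-part is a sum of inner products of
`p, q₁, q₂`, each at most `b`, and the `s³`-part is a combination of `∑ (q₁ - q₂)² q` for
`q ∈ {q₁, q₂}`, which Cauchy–Schwarz bounds by `‖q₁ - q₂‖₄² √b`.
-/

open scoped NNReal Nat

namespace ProbabilityTheory

section PoissonMoments

lemma integrable_pow_poissonMeasure (r : ℝ≥0) (j : ℕ) :
    Integrable (fun n : ℕ ↦ (n : ℝ) ^ j) Po(r) := by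
  rw [integrable_poissonMeasure_iff]
  -- `nʲ ≤ j! eⁿ` dominates the series by a Poisson series of rate `r e`
  refine .of_nonneg_of_le (fun n ↦ by positivity) (fun n ↦ ?_)
    ((Real.summable_pow_div_factorial (r * Real.exp 1)).mul_left (Real.exp (-r) * j !))
  have hn : (n : ℝ) ^ j ≤ j ! * Real.exp n := by
    have := Real.pow_div_factorial_le_exp (n : ℝ) n.cast_nonneg j
    rwa [div_le_iff₀ (by positivity), mul_comm] at this
  rw [Real.norm_of_nonneg (by positivity), mul_pow, Real.exp_one_pow]
  calc Real.exp (-r) * r ^ n / n ! * (n : ℝ) ^ j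
      ≤ Real.exp (-r) * r ^ n / n ! * (j ! * Real.exp n) := by gcongr
    _ = _ := by ring

lemma integrable_descFactorial_poissonMeasure (r : ℝ≥0) (k : ℕ) :
    Integrable (fun n : ℕ ↦ (n.descFactorial k : ℝ)) Po(r) :=
  (integrable_pow_poissonMeasure r k).mono .of_discrete (.of_forall fun n ↦ by
    simp only [Real.norm_natCast, norm_pow]
    exact_mod_cast Nat.descFactorial_le_pow n k)

lemma integral_descFactorial_poissonMeasure (r : ℝ≥0) (k : ℕ) :
    ∫ n, (n.descFactorial k : ℝ) ∂Po(r) = r ^ k := by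
  rw [integral_poissonMeasure]
  have hsupp : Function.support (fun n : ℕ ↦ (Real.exp (-r) * r ^ n / n !) •
      (n.descFactorial k : ℝ)) ⊆ Set.range (· + k) := by
    intro n hn
    refine ⟨n - k, Nat.sub_add_cancel ?_⟩
    by_contra h
    simp [Nat.descFactorial_eq_zero_iff_lt.2 (not_le.1 h)] at hn
  rw [← (add_left_injective k).tsum_eq hsupp]
  have hshift (m : ℕ) :
      (Real.exp (-r) * r ^ (m + k) / (m + k) !) • ((m + k).descFactorial k : ℝ)
        = r ^ k * (Real.exp (-r) * r ^ m / m !) := by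
    have h := Nat.factorial_mul_descFactorial (Nat.le_add_left k m)
    rw [Nat.add_sub_cancel] at h
    rw [smul_eq_mul, ← h]
    push_cast
    field_simp
    ring
  simp_rw [hshift]
  rw [tsum_mul_left, (hasSum_one_poissonMeasure r).tsum_eq, mul_one]

lemma integral_natCast_poissonMeasure (r : ℝ≥0) : ∫ n, (n : ℝ) ∂Po(r) = r := by
  simpa using integral_descFactorial_poissonMeasure r 1

lemma integral_sq_poissonMeasure (r : ℝ≥0) : ∫ n, (n : ℝ) ^ 2 ∂Po(r) = r ^ 2 + r := by
  have hpow (n : ℕ) : (n : ℝ) ^ 2 = n.descFactorial 2 + n.descFactorial 1 := by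
    simp only [← descPochhammer_eval_eq_descFactorial ℝ, descPochhammer_succ_eval,
      descPochhammer_zero, Polynomial.eval_one]
    push_cast
    ring
  have := integrable_descFactorial_poissonMeasure r
  simp_rw [hpow]
  simp (disch := fun_prop) only [integral_add, integral_descFactorial_poissonMeasure, pow_one]

lemma integral_pow_three_poissonMeasure (r : ℝ≥0) :
    ∫ n, (n : ℝ) ^ 3 ∂Po(r) = r ^ 3 + 3 * r ^ 2 + r := by
  have hpow (n : ℕ) :
      (n : ℝ) ^ 3 = n.descFactorial 3 + 3 * n.descFactorial 2 + n.descFactorial 1 := by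
    simp only [← descPochhammer_eval_eq_descFactorial ℝ, descPochhammer_succ_eval,
      descPochhammer_zero, Polynomial.eval_one]
    push_cast
    ring
  have := integrable_descFactorial_poissonMeasure r
  simp_rw [hpow]
  simp (disch := fun_prop) only [integral_add, integral_const_mul,
    integral_descFactorial_poissonMeasure, pow_one]

lemma integral_pow_four_poissonMeasure (r : ℝ≥0) :
    ∫ n, (n : ℝ) ^ 4 ∂Po(r) = r ^ 4 + 6 * r ^ 3 + 7 * r ^ 2 + r := by
  have hpow (n : ℕ) : (n : ℝ) ^ 4 = n.descFactorial 4 + 6 * n.descFactorial 3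
      + 7 * n.descFactorial 2 + n.descFactorial 1 := by
    simp only [← descPochhammer_eval_eq_descFactorial ℝ, descPochhammer_succ_eval,
      descPochhammer_zero, Polynomial.eval_one]
    push_cast
    ring
  have := integrable_descFactorial_poissonMeasure r
  simp_rw [hpow]
  simp (disch := fun_prop) only [integral_add, integral_const_mul,
    integral_descFactorial_poissonMeasure, pow_one]

end PoissonMoments

section PoissonProduct

def natMonomial {ι : Type*} [Fintype ι] (e v : ι → ℕ) : ℝ :=
  ∏ k, (v k : ℝ) ^ e k

variable {ι : Type*} [Fintype ι] (ρ : ι → ℝ≥0) (e : ι → ℕ)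

lemma integrable_natMonomial_pi_poissonMeasure :
    Integrable (natMonomial e) (Measure.pi fun k ↦ Po(ρ k)) :=
  Integrable.fintype_prod fun k ↦ integrable_pow_poissonMeasure (ρ k) (e k)

lemma integral_natMonomial_pi_poissonMeasure :
    ∫ v, natMonomial e v ∂(Measure.pi fun k ↦ Po(ρ k)) = ∏ k, ∫ n, (n : ℝ) ^ e k ∂Po(ρ k) :=
  integral_fintype_prod_eq_prod fun k (n : ℕ) ↦ (n : ℝ) ^ e k

end PoissonProduct

section CrossStat

def crossStat (v : Fin 3 → ℕ) : ℝ :=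
  v 1 + v 0 * v 1 + v 1 * v 2 - v 1 ^ 2 - v 0 * v 2

def crossStatVariance (a b c : ℝ) : ℝ :=
  a * b + b * c + c * a + 2 * b ^ 2 + a * (b - c) ^ 2 + b * (a + c - 2 * b) ^ 2 + c * (a - b) ^ 2

lemma crossStat_eq (v : Fin 3 → ℕ) :
    crossStat v = natMonomial ![0, 1, 0] v + natMonomial ![1, 1, 0] v
      + natMonomial ![0, 1, 1] v - natMonomial ![0, 2, 0] v - natMonomial ![1, 0, 1] v := by
  simp [crossStat, natMonomial, Fin.prod_univ_three]

lemma crossStat_sq_eq (v : Fin 3 → ℕ) :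
    crossStat v ^ 2 = natMonomial ![2, 2, 0] v + natMonomial ![2, 0, 2] v
      + natMonomial ![0, 2, 2] v + natMonomial ![0, 4, 0] v + natMonomial ![0, 2, 0] v
      - 2 * natMonomial ![2, 1, 1] v + 4 * natMonomial ![1, 2, 1] v
      - 2 * natMonomial ![1, 3, 0] v + 2 * natMonomial ![1, 2, 0] v
      - 2 * natMonomial ![1, 1, 2] v - 2 * natMonomial ![1, 1, 1] v
      - 2 * natMonomial ![0, 3, 1] v + 2 * natMonomial ![0, 2, 1] v
      - 2 * natMonomial ![0, 3, 0] v := by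
  simp [crossStat, natMonomial, Fin.prod_univ_three]
  ring

lemma measurable_crossStat : Measurable crossStat := by
  unfold crossStat
  fun_prop

variable (ρ : Fin 3 → ℝ≥0)

lemma memLp_crossStat_pi_poissonMeasure : MemLp crossStat 2 (Measure.pi fun k ↦ Po(ρ k)) := by
  have := integrable_natMonomial_pi_poissonMeasure ρ
  refine (memLp_two_iff_integrable_sq measurable_crossStat.aestronglyMeasurable).2 ?_
  simp_rw [crossStat_sq_eq]
  fun_prop

lemma integral_crossStat_pi_poissonMeasure :
    ∫ v, crossStat v ∂(Measure.pi fun k ↦ Po(ρ k)) = (ρ 0 - ρ 1) * (ρ 1 - ρ 2) := by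
  have := integrable_natMonomial_pi_poissonMeasure ρ
  simp_rw [crossStat_eq]
  simp (disch := fun_prop) only [integral_add, integral_sub,
    integral_natMonomial_pi_poissonMeasure]
  simp [Fin.prod_univ_three, integral_natCast_poissonMeasure, integral_sq_poissonMeasure]
  ring

lemma variance_crossStat_pi_poissonMeasure :
    Var[crossStat; Measure.pi fun k ↦ Po(ρ k)] = crossStatVariance (ρ 0) (ρ 1) (ρ 2) := by
  have := integrable_natMonomial_pi_poissonMeasure ρ
  rw [variance_eq_sub (memLp_crossStat_pi_poissonMeasure ρ), integral_crossStat_pi_poissonMeasure]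
  simp_rw [Pi.pow_apply, crossStat_sq_eq]
  simp (disch := fun_prop) only [integral_add, integral_sub, integral_const_mul,
    integral_natMonomial_pi_poissonMeasure]
  simp [Fin.prod_univ_three, integral_natCast_poissonMeasure, integral_sq_poissonMeasure,
    integral_pow_three_poissonMeasure, integral_pow_four_poissonMeasure, crossStatVariance]
  ring

end CrossStat

section Columns

variable {Ω ι κ β : Type*} {mΩ : MeasurableSpace Ω} {μ : Measure Ω} [MeasurableSpace β]
  {W : κ × ι → Ω → β}

lemma iIndepFun.hasLaw_column [Fintype κ] {P : κ → ι → Measure β}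
    (hW : ∀ k i, HasLaw (W (k, i)) (P k i) μ) (h : iIndepFun W μ) (i : ι) :
    HasLaw (fun ω k ↦ W (k, i) ω) (Measure.pi fun k ↦ P k i) μ :=
  (h.precomp (Prod.mk_left_injective i)).hasLaw_pi fun k ↦ hW k i

lemma iIndepFun.indepFun_column [Fintype κ] (hW : ∀ x, Measurable (W x)) (h : iIndepFun W μ)
    {i j : ι} (hij : i ≠ j) : IndepFun (fun ω k ↦ W (k, i) ω) (fun ω k ↦ W (k, j) ω) μ := by
  have hdisj : Disjoint (univ ×ˢ {i} : Finset (κ × ι)) (univ ×ˢ {j}) := by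
    simp [Finset.disjoint_left, hij.symm]
  have hcol (l : ι) : Measurable fun (v : (univ ×ˢ {l} : Finset (κ × ι)) → β) (k : κ) ↦
      v ⟨(k, l), by simp⟩ :=
    measurable_pi_lambda _ fun k ↦ measurable_pi_apply _
  exact (h.indepFun_finset _ _ hdisj hW).comp (hcol i) (hcol j)

end Columns

section LawOfCrossStat

variable {Ω : Type*} {mΩ : MeasurableSpace Ω} {μ : Measure Ω} {ρ : Fin 3 → ℝ≥0}
  {V : Ω → Fin 3 → ℕ}

lemma HasLaw.memLp_crossStat (hV : HasLaw V (Measure.pi fun k ↦ Po(ρ k)) μ) :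
    MemLp (fun ω ↦ crossStat (V ω)) 2 μ := by
  have hf := memLp_crossStat_pi_poissonMeasure ρ
  rw [← hV.map_eq] at hf
  exact (memLp_map_measure_iff hf.1 hV.aemeasurable).1 hf

lemma HasLaw.integral_crossStat (hV : HasLaw V (Measure.pi fun k ↦ Po(ρ k)) μ) :
    μ[fun ω ↦ crossStat (V ω)] = ((ρ 0 : ℝ) - ρ 1) * (ρ 1 - ρ 2) := by
  rw [← integral_crossStat_pi_poissonMeasure ρ,
    ← hV.integral_comp measurable_crossStat.aestronglyMeasurable]
  rfl

lemma HasLaw.variance_crossStat (hV : HasLaw V (Measure.pi fun k ↦ Po(ρ k)) μ) :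
    Var[fun ω ↦ crossStat (V ω); μ] = crossStatVariance (ρ 0) (ρ 1) (ρ 2) := by
  rw [← variance_crossStat_pi_poissonMeasure ρ, ← hV.map_eq,
    variance_map measurable_crossStat.aemeasurable hV.aemeasurable]
  rfl

end LawOfCrossStat

section SumOfCrossStats

variable {Ω ι : Type*} {mΩ : MeasurableSpace Ω} {μ : Measure Ω} [Fintype ι]
  {W : Fin 3 × ι → Ω → ℕ} {ρ : ι → Fin 3 → ℝ≥0}

lemma integral_sum_crossStat (hW : ∀ k i, HasLaw (W (k, i)) Po(ρ i k) μ) (h : iIndepFun W μ) :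
    μ[fun ω ↦ ∑ i, crossStat fun k ↦ W (k, i) ω]
      = ∑ i, ((ρ i 0 : ℝ) - ρ i 1) * (ρ i 1 - ρ i 2) := by
  have := h.isProbabilityMeasure
  rw [integral_finsetSum _ fun i _ ↦
    ((h.hasLaw_column hW i).memLp_crossStat.integrable one_le_two)]
  exact sum_congr rfl fun i _ ↦ (h.hasLaw_column hW i).integral_crossStat

lemma variance_sum_crossStat (hWm : ∀ x, Measurable (W x))
    (hW : ∀ k i, HasLaw (W (k, i)) Po(ρ i k) μ) (h : iIndepFun W μ) :
    Var[fun ω ↦ ∑ i, crossStat fun k ↦ W (k, i) ω; μ]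
      = ∑ i, crossStatVariance (ρ i 0) (ρ i 1) (ρ i 2) := by
  have hsum := IndepFun.variance_sum (s := univ) (X := fun i ω ↦ crossStat fun k ↦ W (k, i) ω)
    (fun i _ ↦ (h.hasLaw_column hW i).memLp_crossStat) fun i _ j _ hij ↦
      (h.indepFun_column hWm hij).comp measurable_crossStat measurable_crossStat
  rw [sum_fn] at hsum
  rw [hsum]
  exact sum_congr rfl fun i _ ↦ (h.hasLaw_column hW i).variance_crossStat

end SumOfCrossStats

end ProbabilityTheory

section VarianceBound

variable {ι : Type*} [Fintype ι]

lemma sum_mul_le_sqrt_mul_sqrt_of_sum_sq_le (f : ι → ℝ) {g : ι → ℝ} {b : ℝ}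
    (hg : ∑ i, g i ^ 2 ≤ b) : ∑ i, f i * g i ≤ √(∑ i, f i ^ 2) * √b :=
  (Real.sum_mul_le_sqrt_mul_sqrt _ f g).trans (by gcongr)

lemma sum_mul_le_of_sum_sq_le {f g : ι → ℝ} {b : ℝ} (hf : ∑ i, f i ^ 2 ≤ b)
    (hg : ∑ i, g i ^ 2 ≤ b) : ∑ i, f i * g i ≤ b := by
  have hb : 0 ≤ b := (sum_nonneg fun i _ ↦ sq_nonneg (f i)).trans hf
  calc ∑ i, f i * g i ≤ √(∑ i, f i ^ 2) * √b := sum_mul_le_sqrt_mul_sqrt_of_sum_sq_le f hg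
    _ ≤ √b * √b := by gcongr
    _ = b := Real.mul_self_sqrt hb

lemma sum_sq_le_of_convex_combination {p q₁ q₂ : ι → ℝ} {α b : ℝ} (hα0 : 0 ≤ α) (hα1 : α ≤ 1)
    (hp : ∀ i, p i = (1 - α) * q₁ i + α * q₂ i) (hb₁ : ∑ i, q₁ i ^ 2 ≤ b)
    (hb₂ : ∑ i, q₂ i ^ 2 ≤ b) : ∑ i, p i ^ 2 ≤ b :=
  calc ∑ i, p i ^ 2 ≤ ∑ i, ((1 - α) * q₁ i ^ 2 + α * q₂ i ^ 2) := by
        gcongr with i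
        rw [hp i]
        nlinarith [mul_nonneg (mul_nonneg hα0 (sub_nonneg.2 hα1)) (sq_nonneg (q₁ i - q₂ i))]
    _ = (1 - α) * ∑ i, q₁ i ^ 2 + α * ∑ i, q₂ i ^ 2 := by
        rw [sum_add_distrib, mul_sum, mul_sum]
    _ ≤ (1 - α) * b + α * b := by gcongr
    _ = b := by ring

lemma crossStatVariance_le {p q₁ q₂ α s : ℝ} (hq₁ : 0 ≤ q₁) (hq₂ : 0 ≤ q₂) (hα0 : 0 ≤ α)
    (hα1 : α ≤ 1) (hp : p = (1 - α) * q₁ + α * q₂) (hs : 0 ≤ s) :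
    crossStatVariance (s * p) (s * q₁) (s * q₂)
      ≤ s ^ 2 * (p * q₁ + q₁ * q₂ + p * q₂ + 2 * q₁ ^ 2)
        + s ^ 3 * (4 * ((q₁ - q₂) ^ 2 * q₁) + 2 * ((q₁ - q₂) ^ 2 * q₂)) := by
  have hslack : s ^ 2 * (p * q₁ + q₁ * q₂ + p * q₂ + 2 * q₁ ^ 2)
      + s ^ 3 * (4 * ((q₁ - q₂) ^ 2 * q₁) + 2 * ((q₁ - q₂) ^ 2 * q₂))
      - crossStatVariance (s * p) (s * q₁) (s * q₂)
      = s ^ 3 * (q₁ - q₂) ^ 2 * ((2 + α) * (1 - α)) * (q₁ + q₂) := by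
    rw [crossStatVariance, hp]
    ring
  have : 0 ≤ s ^ 3 * (q₁ - q₂) ^ 2 * ((2 + α) * (1 - α)) * (q₁ + q₂) := by
    have : 0 ≤ 1 - α := sub_nonneg.2 hα1
    positivity
  linarith

lemma sum_crossStatVariance_le {p q₁ q₂ : ι → ℝ} (hq₁ : ∀ i, 0 ≤ q₁ i) (hq₂ : ∀ i, 0 ≤ q₂ i)
    {α : ℝ} (hα0 : 0 ≤ α) (hα1 : α ≤ 1) (hp : ∀ i, p i = (1 - α) * q₁ i + α * q₂ i)
    {s : ℝ} (hs : 0 ≤ s) {b : ℝ} (hb₁ : ∑ i, q₁ i ^ 2 ≤ b) (hb₂ : ∑ i, q₂ i ^ 2 ≤ b) :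
    4 * ∑ i, crossStatVariance (s * p i) (s * q₁ i) (s * q₂ i)
      ≤ 32 * s ^ 3 * √(∑ i, (q₁ i - q₂ i) ^ 4) * √b + 28 * s ^ 2 * b := by
  have hR (q : ι → ℝ) (hq : ∑ i, q i ^ 2 ≤ b) :
      ∑ i, (q₁ i - q₂ i) ^ 2 * q i ≤ √(∑ i, (q₁ i - q₂ i) ^ 4) * √b := by
    have h4 : ∑ i, (q₁ i - q₂ i) ^ 4 = ∑ i, ((q₁ i - q₂ i) ^ 2) ^ 2 :=
      sum_congr rfl fun i _ ↦ by ring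
    rw [h4]
    exact sum_mul_le_sqrt_mul_sqrt_of_sum_sq_le _ hq
  have hbp := sum_sq_le_of_convex_combination hα0 hα1 hp hb₁ hb₂
  have h₁ := sum_mul_le_of_sum_sq_le hbp hb₁
  have h₂ := sum_mul_le_of_sum_sq_le hb₁ hb₂
  have h₃ := sum_mul_le_of_sum_sq_le hbp hb₂
  have hR₁ := hR q₁ hb₁
  have hR₂ := hR q₂ hb₂
  have hb : 0 ≤ b := (sum_nonneg fun i _ ↦ sq_nonneg (q₁ i)).trans hb₁
  set R := √(∑ i, (q₁ i - q₂ i) ^ 4) * √b with hR_def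
  have hR0 : 0 ≤ R := by positivity
  calc 4 * ∑ i, crossStatVariance (s * p i) (s * q₁ i) (s * q₂ i)
      ≤ 4 * ∑ i, (s ^ 2 * (p i * q₁ i + q₁ i * q₂ i + p i * q₂ i + 2 * q₁ i ^ 2)
        + s ^ 3 * (4 * ((q₁ i - q₂ i) ^ 2 * q₁ i) + 2 * ((q₁ i - q₂ i) ^ 2 * q₂ i))) := by
        gcongr with i
        exact crossStatVariance_le (hq₁ i) (hq₂ i) hα0 hα1 (hp i) hs
    _ = 4 * (s ^ 2 * (∑ i, p i * q₁ i + ∑ i, q₁ i * q₂ i + ∑ i, p i * q₂ i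
          + 2 * ∑ i, q₁ i ^ 2) + s ^ 3 * (4 * ∑ i, (q₁ i - q₂ i) ^ 2 * q₁ i
          + 2 * ∑ i, (q₁ i - q₂ i) ^ 2 * q₂ i)) := by
        simp only [sum_add_distrib, ← mul_sum]
    _ ≤ 4 * (s ^ 2 * (b + b + b + 2 * b) + s ^ 3 * (4 * R + 2 * R)) := by gcongr
    _ ≤ 32 * s ^ 3 * √(∑ i, (q₁ i - q₂ i) ^ 4) * √b + 28 * s ^ 2 * b := by
        rw [mul_assoc _ (√_), ← hR_def]
        nlinarith [mul_nonneg (pow_nonneg hs 2) hb, mul_nonneg (pow_nonneg hs 3) hR0]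

end VarianceBound

theorem stmt10_general {n : ℕ} (p q₁ q₂ : Fin n → ℝ)
    (hq₁ : IsDist q₁) (hq₂ : IsDist q₂)
    (αs : ℝ) (hαs0 : 0 ≤ αs) (hαs1 : αs ≤ 1)
    (hp : ∀ i, p i = (1 - αs) * q₁ i + αs * q₂ i)
    (s : ℝ) (hs : 0 < s)
    {Ω : Type*} [MeasurableSpace Ω] (μ : Measure Ω)
    (X Y Z : Fin n → Ω → ℕ)
    (W : Fin 3 × Fin n → Ω → ℕ)
    (hWmeas : ∀ k, Measurable (W k))
    (hW : ∀ i, W (0, i) = X i ∧ W (1, i) = Y i ∧ W (2, i) = Z i)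
    (hindep : iIndepFun W μ)
    (hX : ∀ i, μ.map (X i) = poissonMeasure (s * p i).toNNReal)
    (hY : ∀ i, μ.map (Y i) = poissonMeasure (s * q₁ i).toNNReal)
    (hZ : ∀ i, μ.map (Z i) = poissonMeasure (s * q₂ i).toNNReal)
    (B : Ω → ℝ)
    (hB : ∀ ω, B ω = 2 * ∑ i, ((Y i ω : ℝ) + (X i ω : ℝ) * (Y i ω : ℝ)
        + (Y i ω : ℝ) * (Z i ω : ℝ) - (Y i ω : ℝ) ^ 2 - (X i ω : ℝ) * (Z i ω : ℝ))) :
    (μ[B] = -2 * αs * s ^ 2 * ∑ i, (q₁ i - q₂ i) ^ 2) ∧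
    ∀ b : ℝ, max (∑ i, q₁ i ^ 2) (∑ i, q₂ i ^ 2) ≤ b →
      variance B μ ≤ 32 * s ^ 3 * Real.sqrt (∑ i, (q₁ i - q₂ i) ^ 4) * Real.sqrt b
        + 28 * s ^ 2 * b := by
  have hp0 (i : Fin n) : 0 ≤ p i := by
    rw [hp i]
    nlinarith [hq₁.1 i, hq₂.1 i]
  set ρ : Fin n → Fin 3 → ℝ≥0 :=
    fun i ↦ ![(s * p i).toNNReal, (s * q₁ i).toNNReal, (s * q₂ i).toNNReal]
  have hlaw (k : Fin 3) (i : Fin n) : HasLaw (W (k, i)) Po(ρ i k) μ := by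
    refine ⟨(hWmeas _).aemeasurable, ?_⟩
    fin_cases k <;> simp [ρ, hW, hX, hY, hZ]
  have hρ (i : Fin n) :
      (ρ i 0 : ℝ) = s * p i ∧ (ρ i 1 : ℝ) = s * q₁ i ∧ (ρ i 2 : ℝ) = s * q₂ i := by
    simp [ρ, mul_nonneg hs.le (hp0 i), mul_nonneg hs.le (hq₁.1 i), mul_nonneg hs.le (hq₂.1 i)]
  have hBW : B = fun ω ↦ 2 * ∑ i, crossStat fun k ↦ W (k, i) ω := by
    ext ω
    simp [hB, crossStat, hW]
  subst hBW
  refine ⟨?_, fun b hb ↦ ?_⟩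
  · rw [integral_const_mul, integral_sum_crossStat hlaw hindep, mul_sum, mul_sum]
    refine sum_congr rfl fun i _ ↦ ?_
    simp only [hρ, hp i]
    ring
  · rw [variance_const_mul, variance_sum_crossStat hWmeas hlaw hindep]
    simp only [hρ]
    rw [show (2 : ℝ) ^ 2 = 4 by norm_num]
    exact sum_crossStatVariance_le hq₁.1 hq₂.1 hαs0 hαs1 hp hs.le
      ((le_max_left _ _).trans hb) ((le_max_right _ _).trans hb)

/-- With `p = (1−α*)q₁ + α*q₂`, mutually independent
`X_i ∼ Poi(s·p(i))`, `Y_i ∼ Poi(s·q₁(i))`, `Z_i ∼ Poi(s·q₂(i))` and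
`B = 2∑ᵢ (Yᵢ + XᵢYᵢ + YᵢZᵢ − Yᵢ² − XᵢZᵢ)`, one has
`E[B] = −2α*s²‖q₁ − q₂‖₂²` and, for `b ≥ max(‖q₁‖₂², ‖q₂‖₂²)`,
`Var(B) ≤ 32s³‖q₁ − q₂‖₄²√b + 28s²b`. -/
theorem stmt10 {n : ℕ} (p q₁ q₂ : Fin n → ℝ)
    (hq₁ : IsDist q₁) (hq₂ : IsDist q₂)
    (αs : ℝ) (hαs0 : 0 ≤ αs) (hαs1 : αs ≤ 1)
    (hp : ∀ i, p i = (1 - αs) * q₁ i + αs * q₂ i)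
    (s : ℝ) (hs : 0 < s)
    {Ω : Type*} [MeasurableSpace Ω] (μ : Measure Ω) [IsProbabilityMeasure μ]
    (X Y Z : Fin n → Ω → ℕ)
    (W : Fin 3 × Fin n → Ω → ℕ)
    (hWmeas : ∀ k, Measurable (W k))
    (hW : ∀ i, W (0, i) = X i ∧ W (1, i) = Y i ∧ W (2, i) = Z i)
    (hindep : iIndepFun W μ)
    (hX : ∀ i, μ.map (X i) = poissonMeasure (s * p i).toNNReal)
    (hY : ∀ i, μ.map (Y i) = poissonMeasure (s * q₁ i).toNNReal)
    (hZ : ∀ i, μ.map (Z i) = poissonMeasure (s * q₂ i).toNNReal)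
    (B : Ω → ℝ)
    (hB : ∀ ω, B ω = 2 * ∑ i, ((Y i ω : ℝ) + (X i ω : ℝ) * (Y i ω : ℝ)
        + (Y i ω : ℝ) * (Z i ω : ℝ) - (Y i ω : ℝ) ^ 2 - (X i ω : ℝ) * (Z i ω : ℝ))) :
    (μ[B] = -2 * αs * s ^ 2 * ∑ i, (q₁ i - q₂ i) ^ 2) ∧
    ∀ b : ℝ, max (∑ i, q₁ i ^ 2) (∑ i, q₂ i ^ 2) ≤ b →
      variance B μ ≤ 32 * s ^ 3 * Real.sqrt (∑ i, (q₁ i - q₂ i) ^ 4) * Real.sqrt b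
        + 28 * s ^ 2 * b :=
  stmt10_general p q₁ q₂ hq₁ hq₂ αs hαs0 hαs1 hp s hs μ X Y Z W hWmeas hW hindep hX hY hZ B hB
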